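/- Let d be a positive integer, let σ : ℝ → ℝ be differentiable with σ(t) > 0 for all t, and let μ : ℝ → ℝ^d (Euclidean space) be differentiable. Fix t ∈ ℝ and define the density q(x) = (2π σ(t)²)^{-d/2} exp(−‖x − μ(t)‖² / (2σ(t)²)) and the velocity field u(x) = (σ'(t)/σ(t))·(x − μ(t)) + μ'(t). Then the divergence of the vector field x ↦ q(x) u(x) satisfies, for every x ∈ ℝ^d, div(q·u)(x) = (σ'(t)/σ(t))·( d − ‖x − μ(t)‖²/σ(t)² )·q(x) − ( ⟪x − μ(t), μ'(t)⟫ / σ(t)² )·q(x). -/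

import Mathlib

/-! By the product rule, `div (q • u) = q · div u + ⟪∇q, u⟫`. The field `u` is affine with
linear part `(σ'/σ) · id`, so `div u = d σ'/σ`, and the Gaussian has gradient
`∇q(x) = -q(x) (x - μ) / σ²`; expanding `⟪x - μ, u x⟫` gives the formula. -/

open Real
open scoped RealInnerProductSpace

/-- The divergence of a vector field `v` on Euclidean space at `x`:
the trace of its Fréchet derivative at `x`. -/
noncomputable def divergence {d : ℕ}
    (v : EuclideanSpace ℝ (Fin d) → EuclideanSpace ℝ (Fin d))
    (x : EuclideanSpace ℝ (Fin d)) : ℝ :=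
  LinearMap.trace ℝ (EuclideanSpace ℝ (Fin d)) (fderiv ℝ v x).toLinearMap

theorem hasFDerivAt_mul_exp_neg_norm_sub_sq_div {E : Type*} [NormedAddCommGroup E]
    [InnerProductSpace ℝ E] (C s : ℝ) (m x : E) :
    HasFDerivAt (fun y : E => C * exp (-‖y - m‖ ^ 2 / (2 * s ^ 2)))
      ((-(C * exp (-‖x - m‖ ^ 2 / (2 * s ^ 2))) / s ^ 2) • innerSL ℝ (x - m)) x := by
  have hexponent : HasFDerivAt (fun y : E => -‖y - m‖ ^ 2 / (2 * s ^ 2))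
      ((-(2 * s ^ 2)⁻¹ * 2) • innerSL ℝ (x - m)) x := by
    have hquadratic : (fun y : E => -‖y - m‖ ^ 2 / (2 * s ^ 2))
        = fun y => -(2 * s ^ 2)⁻¹ * ‖y - m‖ ^ 2 := by
      funext y; ring
    rw [hquadratic, mul_smul]
    simpa only [id, ContinuousLinearMap.comp_id, two_smul] using
      ((hasFDerivAt_id x).sub_const m).norm_sq.const_mul (-(2 * s ^ 2)⁻¹)
  refine (hexponent.exp.const_mul C).congr_fderiv ?_
  rw [smul_smul, smul_smul]
  congr 1
  ring

section Divergence

variable {d : ℕ}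

theorem divergence_smul {f : EuclideanSpace ℝ (Fin d) → ℝ}
    {v : EuclideanSpace ℝ (Fin d) → EuclideanSpace ℝ (Fin d)} {x : EuclideanSpace ℝ (Fin d)}
    (hf : DifferentiableAt ℝ f x) (hv : DifferentiableAt ℝ v x) :
    divergence (fun y => f y • v y) x = f x * divergence v x + fderiv ℝ f x (v x) := by
  rw [divergence, divergence, fderiv_fun_smul hf hv, ContinuousLinearMap.toLinearMap_add,
    ContinuousLinearMap.toLinearMap_smul, ContinuousLinearMap.coe_smulRight, map_add, map_smul,
    LinearMap.trace_smulRight, smul_eq_mul, ContinuousLinearMap.coe_coe]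

theorem divergence_smul_sub_add (c : ℝ) (m v x : EuclideanSpace ℝ (Fin d)) :
    divergence (fun y => c • (y - m) + v) x = c * d := by
  have hderiv : HasFDerivAt (fun y => c • (y - m) + v) (c • ContinuousLinearMap.id ℝ _) x :=
    (((hasFDerivAt_id x).sub_const m).const_smul c).add_const v
  rw [divergence, hderiv.fderiv, ContinuousLinearMap.toLinearMap_smul, ContinuousLinearMap.coe_id,
    map_smul, LinearMap.trace_id, finrank_euclideanSpace_fin, smul_eq_mul]

end Divergence

theorem gaussian_flux_divergence_general
    (d : ℕ)
    (σ : ℝ → ℝ)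
    (μ : ℝ → EuclideanSpace ℝ (Fin d))
    (t : ℝ)
    (q : EuclideanSpace ℝ (Fin d) → ℝ)
    (hq : ∀ x, q x =
      (2 * π * (σ t) ^ 2) ^ (-(d : ℝ) / 2) *
        Real.exp (-‖x - μ t‖ ^ 2 / (2 * (σ t) ^ 2)))
    (u : EuclideanSpace ℝ (Fin d) → EuclideanSpace ℝ (Fin d))
    (hu : ∀ x, u x = (deriv σ t / σ t) • (x - μ t) + deriv μ t) :
    ∀ x : EuclideanSpace ℝ (Fin d),
      divergence (fun y => q y • u y) x =
        (deriv σ t / σ t) * ((d : ℝ) - ‖x - μ t‖ ^ 2 / (σ t) ^ 2) * q x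
          - (⟪x - μ t, deriv μ t⟫ / (σ t) ^ 2) * q x := by
  intro x
  obtain rfl : q = _ := funext hq
  obtain rfl : u = _ := funext hu
  have hgrad := hasFDerivAt_mul_exp_neg_norm_sub_sq_div ((2 * π * σ t ^ 2) ^ (-(d : ℝ) / 2))
    (σ t) (μ t) x
  have hflow : DifferentiableAt ℝ (fun y => (deriv σ t / σ t) • (y - μ t) + deriv μ t) x := by
    fun_prop
  rw [divergence_smul hgrad.differentiableAt hflow, divergence_smul_sub_add, hgrad.fderiv,
    smul_apply, innerSL_apply_apply, inner_add_right, real_inner_smul_right,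
    real_inner_self_eq_norm_sq, smul_eq_mul]
  ring

theorem gaussian_flux_divergence
    (d : ℕ) (hd : 0 < d)
    (σ : ℝ → ℝ) (hσ : Differentiable ℝ σ) (hσpos : ∀ t, 0 < σ t)
    (μ : ℝ → EuclideanSpace ℝ (Fin d)) (hμ : Differentiable ℝ μ)
    (t : ℝ)
    (q : EuclideanSpace ℝ (Fin d) → ℝ)
    (hq : ∀ x, q x =
      (2 * π * (σ t) ^ 2) ^ (-(d : ℝ) / 2) *
        Real.exp (-‖x - μ t‖ ^ 2 / (2 * (σ t) ^ 2)))
    (u : EuclideanSpace ℝ (Fin d) → EuclideanSpace ℝ (Fin d))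
    (hu : ∀ x, u x = (deriv σ t / σ t) • (x - μ t) + deriv μ t) :
    ∀ x : EuclideanSpace ℝ (Fin d),
      divergence (fun y => q y • u y) x =
        (deriv σ t / σ t) * ((d : ℝ) - ‖x - μ t‖ ^ 2 / (σ t) ^ 2) * q x
          - (⟪x - μ t, deriv μ t⟫ / (σ t) ^ 2) * q x :=
  gaussian_flux_divergence_general d σ μ t q hq u hu
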